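/- Let P be a finite set of points in ℝ², let 0 < α ≤ 1, and let k ∈ ℕ. For S ⊆ P, define r_S : P → ℝ by r_S(p) = α if p ∈ S and r_S(p) = 1 otherwise, and let G_S be the closed-disk intersection graph of (P, r_S). Suppose G_∅ (the closed unit disk graph, where distinct p,q are adjacent iff dist(p,q) ≤ 2) is connected, and suppose some v ∈ P satisfies |{u ∈ P : u ≠ v and dist(u,v) ≤ 2}| ≥ 9(4/α + 1)² + 9 + k. Then there exists S ⊆ P with |S| ≥ k such that G_S is connected; i.e., (P,α,k) is a yes-instance of k-Shrinking to Connectivity. -/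

import Mathlib

open scoped Classical

abbrev Pt := EuclideanSpace ℝ (Fin 2)

/-- The closed-disk intersection graph of the points of `P` with radius assignment `r`:
distinct points `p, q ∈ P` are adjacent iff `dist p q ≤ r p + r q`. -/
def closedDiskGraph (P : Finset Pt) (r : Pt → ℝ) : SimpleGraph {x : Pt // x ∈ P} where
  Adj p q := p ≠ q ∧ dist (p : Pt) (q : Pt) ≤ r p + r q
  symm := ⟨fun p q h => ⟨h.1.symm, by rw [dist_comm, add_comm]; exact h.2⟩⟩
  loopless := ⟨fun p h => h.1 rfl⟩

/-!
Let `D` be the points of `P` at distance `≤ 2` from `v` (other than `v`) and `K ⊆ D` a maximal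
`1`-separated subset; a grid count shows that at most `36` points which are pairwise more than `2r`
apart fit in a ball of radius `4r`, so `|K| ≤ 36`. Shrink `S = D \ K`. Every shrunk disk still
touches an unshrunk disk of `K`, which touches `v`, so all of `D` stays in the component of `v`.
If the graph is disconnected, some edge `ab` of the unit disk graph leaves that component; then
`b ∈ S`, while `a` is unshrunk, at distance in `(2, 4]` from `v` and more than `2` from every
unshrunk point of the component. Unshrinking `b` pulls `a` into the component. The points `a`
collected along the way are `2`-separated in the ball of radius `4` around `v`, so this happens at
most `36` times, and at least `|D| - 72 ≥ k` disks stay shrunk.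
-/

open Finset

section Grid

variable {ι : Type*}

lemma dist_lt_sqrt_card_mul_of_abs_sub_lt [Fintype ι] [Nonempty ι]
    {x y : EuclideanSpace ℝ ι} {s : ℝ} (h : ∀ i, |x i - y i| < s) :
    dist x y < √(Fintype.card ι) * s := by
  have hs : 0 < s := (abs_nonneg _).trans_lt (h (Classical.arbitrary ι))
  rw [EuclideanSpace.dist_eq, ← Real.sqrt_sq hs.le, ← Real.sqrt_mul (Nat.cast_nonneg _)]
  refine Real.sqrt_lt_sqrt (by positivity) ?_
  calc ∑ i, dist (x i) (y i) ^ 2 < ∑ _i : ι, s ^ 2 :=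
        sum_lt_sum_of_nonempty univ_nonempty fun i _ =>
          by rw [Real.dist_eq]; exact pow_lt_pow_left₀ (h i) (abs_nonneg _) two_ne_zero
    _ = Fintype.card ι * s ^ 2 := by simp

noncomputable def gridCell (c : EuclideanSpace ℝ ι) (s : ℝ) (x : EuclideanSpace ℝ ι) : ι → ℤ :=
  fun i => ⌊(x i - c i) / s⌋

variable {c x y : EuclideanSpace ℝ ι} {s : ℝ}

lemma abs_sub_lt_of_gridCell_eq (hs : 0 < s) (h : gridCell c s x = gridCell c s y) (i : ι) :
    |x i - y i| < s := by
  have := Int.abs_sub_lt_one_of_floor_eq_floor (congrFun h i)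
  rwa [← sub_div, sub_sub_sub_cancel_right, abs_div, abs_of_pos hs, div_lt_one hs] at this

lemma gridCell_mem_piFinset [Fintype ι] [DecidableEq ι] (hs : 0 < s) (hx : dist x c < 3 * s) :
    gridCell c s x ∈ Fintype.piFinset fun _ : ι => Icc (-3 : ℤ) 2 := by
  refine Fintype.mem_piFinset.2 fun i => mem_Icc.2 ?_
  have hi : |x i - c i| < 3 * s := (PiLp.dist_apply_le x c i).trans_lt hx
  obtain ⟨hlo, hhi⟩ := abs_lt.1 hi
  have hlo' : -3 < (x i - c i) / s := by rw [lt_div_iff₀ hs]; linarith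
  have hhi' : (x i - c i) / s < 3 := by rw [div_lt_iff₀ hs]; linarith
  constructor
  · exact Int.le_floor.2 (by push_cast; linarith)
  · exact Int.lt_add_one_iff.1 (Int.floor_lt.2 (by push_cast; linarith))

end Grid

/-- Cells of side `7r/5` have diameter `< 2r`, and `4r < 3 · 7r/5`, so `X` meets at most `6 × 6`
cells, each in at most one point. -/
theorem card_le_of_pairwise_lt_dist {X : Finset Pt} {c : Pt} {r : ℝ} (hr : 0 < r)
    (hX : ∀ x ∈ X, dist x c ≤ 4 * r) (hsep : (X : Set Pt).Pairwise (2 * r < dist · ·)) :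
    #X ≤ 36 := by
  have hs : (0 : ℝ) < 7 / 5 * r := by positivity
  have hinj : Set.InjOn (gridCell c (7 / 5 * r)) X := by
    intro x hx y hy hxy
    by_contra hne
    have h := dist_lt_sqrt_card_mul_of_abs_sub_lt (abs_sub_lt_of_gridCell_eq hs hxy)
    have hsqrt : √(Fintype.card (Fin 2)) ≤ 10 / 7 := by
      rw [Fintype.card_fin, Real.sqrt_le_left] <;> norm_num
    linarith [hsep hx hy hne, mul_le_mul_of_nonneg_right hsqrt hs.le]
  calc #X ≤ #(Fintype.piFinset fun _ : Fin 2 => Icc (-3 : ℤ) 2) :=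
        card_le_card_of_injOn _ (fun x hx => gridCell_mem_piFinset hs (by linarith [hX x hx])) hinj
    _ = 36 := by simp

theorem Finset.exists_subset_pairwise_lt_dist_forall_exists_dist_le {α : Type*}
    [PseudoMetricSpace α] (D : Finset α) {ε : ℝ} (hε : 0 ≤ ε) :
    ∃ K ⊆ D, (K : Set α).Pairwise (ε < dist · ·) ∧ ∀ d ∈ D, ∃ k ∈ K, dist d k ≤ ε := by
  obtain ⟨K, -, hK⟩ := Finset.exists_le_maximal
    (D.powerset.filter fun K : Finset α => (K : Set α).Pairwise (ε < dist · ·))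
    (a := (∅ : Finset α)) (by simp)
  simp only [mem_filter, mem_powerset] at hK
  refine ⟨K, hK.1.1, hK.1.2, fun d hd => ?_⟩
  by_cases hdK : d ∈ K
  · exact ⟨d, hdK, by simpa using hε⟩
  by_contra! hfar
  have hins : insert d K ⊆ D ∧ (↑(insert d K) : Set α).Pairwise (ε < dist · ·) := by
    refine ⟨insert_subset hd hK.1.1, ?_⟩
    rw [coe_insert, Set.pairwise_insert]
    exact ⟨hK.1.2, fun k hk _ => ⟨hfar k hk, dist_comm d k ▸ hfar k hk⟩⟩
  exact hdK (hK.2 hins (subset_insert d K) (mem_insert_self d K))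

theorem SimpleGraph.exists_adj_not_reachable_reachable {V : Type*} {G H : SimpleGraph V}
    (hH : H.Connected) (hG : ¬G.Connected) (v : V) :
    ∃ a b, H.Adj a b ∧ ¬G.Reachable a v ∧ G.Reachable b v := by
  obtain ⟨w, hw⟩ : ∃ w, ¬G.Reachable w v := by
    by_contra! h
    have := hH.nonempty
    exact hG ⟨fun x y => (h x).trans (h y).symm⟩
  obtain ⟨d, -, hd, hd'⟩ :=
    (hH.preconnected v w).some.exists_boundary_dart {x | G.Reachable x v} .rfl hw
  exact ⟨d.snd, d.fst, d.adj.symm, hd', hd⟩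

noncomputable def shrunkGraph (P : Finset Pt) (α : ℝ) (S : Finset Pt) :
    SimpleGraph {x // x ∈ P} :=
  closedDiskGraph P fun x => if x ∈ S then α else 1

section ShrunkGraph

variable {P S T : Finset Pt} {α : ℝ} {x y : {x // x ∈ P}}

lemma shrunkGraph_adj_of_notMem (hxy : x ≠ y) (hx : ↑x ∉ S) (hy : ↑y ∉ S)
    (h : dist (x : Pt) y ≤ 2) : (shrunkGraph P α S).Adj x y :=
  ⟨hxy, by simp only [if_neg hx, if_neg hy]; linarith⟩

lemma shrunkGraph_adj_of_mem_of_notMem (hα : 0 ≤ α) (hx : ↑x ∈ S) (hy : ↑y ∉ S)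
    (h : dist (x : Pt) y ≤ 1) : (shrunkGraph P α S).Adj x y :=
  ⟨fun hxy => hy (hxy ▸ hx), by simp only [if_pos hx, if_neg hy]; linarith⟩

lemma shrunkGraph_anti (hα : α ≤ 1) (hST : S ⊆ T) : shrunkGraph P α T ≤ shrunkGraph P α S := by
  have hr (z : Pt) : (if z ∈ T then α else 1) ≤ if z ∈ S then α else 1 := by
    split_ifs with hT hS <;> first | exact le_rfl | exact hα | exact absurd (hST ‹_›) hT
  exact fun x y ⟨hxy, h⟩ => ⟨hxy, h.trans (add_le_add (hr x) (hr y))⟩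

end ShrunkGraph

structure IsShrinkable (P : Finset Pt) (v : Pt) (S : Finset Pt) : Prop where
  subset : S ⊆ P
  notMem : v ∉ S
  dist_le : ∀ s ∈ S, dist s v ≤ 2
  exists_partner : ∀ s ∈ S, ∃ t ∈ P, t ∉ S ∧ dist t v ≤ 2 ∧ dist s t ≤ 1

namespace IsShrinkable

variable {P S T : Finset Pt} {v : Pt} {α : ℝ}

lemma mono (hS : IsShrinkable P v S) (hTS : T ⊆ S) : IsShrinkable P v T where
  subset := hTS.trans hS.subset
  notMem := fun h => hS.notMem (hTS h)
  dist_le := fun s hs => hS.dist_le s (hTS hs)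
  exists_partner := fun s hs => by
    obtain ⟨t, htP, htS, htv, hst⟩ := hS.exists_partner s (hTS hs)
    exact ⟨t, htP, fun h => htS (hTS h), htv, hst⟩

lemma reachable_of_notMem (hS : IsShrinkable P v S) (hv : v ∈ P) {x : {x // x ∈ P}}
    (hx : ↑x ∉ S) (hxv : dist (x : Pt) v ≤ 2) : (shrunkGraph P α S).Reachable x ⟨v, hv⟩ := by
  by_cases hxv' : x = ⟨v, hv⟩
  · exact hxv' ▸ .rfl
  · exact (shrunkGraph_adj_of_notMem hxv' hx hS.notMem hxv).reachable

lemma reachable_of_mem (hS : IsShrinkable P v S) (hα : 0 ≤ α) (hv : v ∈ P) {x : {x // x ∈ P}}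
    (hx : ↑x ∈ S) : (shrunkGraph P α S).Reachable x ⟨v, hv⟩ := by
  obtain ⟨t, htP, htS, htv, hxt⟩ := hS.exists_partner x hx
  exact (shrunkGraph_adj_of_mem_of_notMem (y := ⟨t, htP⟩) hα hx htS hxt).reachable.trans
    (hS.reachable_of_notMem hv htS htv)

lemma exists_boundary_edge (hS : IsShrinkable P v S) (hα : 0 ≤ α) (hv : v ∈ P)
    (hconn : (closedDiskGraph P fun _ => 1).Connected) (hc : ¬(shrunkGraph P α S).Connected) :
    ∃ a b : {x // x ∈ P}, ↑a ∉ S ∧ ↑b ∈ S ∧ dist (a : Pt) b ≤ 2 ∧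
      ¬(shrunkGraph P α S).Reachable a ⟨v, hv⟩ := by
  obtain ⟨a, b, ⟨hab, hdist⟩, ha, hb⟩ :=
    SimpleGraph.exists_adj_not_reachable_reachable hconn hc ⟨v, hv⟩
  have haS : ↑a ∉ S := fun h => ha (hS.reachable_of_mem hα hv h)
  have hbS : ↑b ∈ S := by
    by_contra h
    exact ha ((shrunkGraph_adj_of_notMem hab haS h (by linarith)).reachable.trans hb)
  exact ⟨a, b, haS, hbS, by linarith, ha⟩

theorem exists_subset_connected (hα₀ : 0 ≤ α) (hα₁ : α ≤ 1) (hv : v ∈ P)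
    (hconn : (closedDiskGraph P fun _ => 1).Connected) (hS : IsShrinkable P v S)
    (X : Finset {x // x ∈ P}) (hXS : ∀ x ∈ X, ↑x ∉ S) (hXv : ∀ x ∈ X, dist (x : Pt) v ≤ 4)
    (hXr : ∀ x ∈ X, (shrunkGraph P α S).Reachable x ⟨v, hv⟩)
    (hXsep : (X : Set {x // x ∈ P}).Pairwise (2 < dist · ·)) :
    ∃ T ⊆ S, #S + #X ≤ #T + 36 ∧ (shrunkGraph P α T).Connected := by
  induction S using Finset.strongInduction generalizing X with
  | H S ih =>
  have hX : #X ≤ 36 := by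
    rw [← card_map (.subtype _)]
    refine card_le_of_pairwise_lt_dist (c := v) (r := 1) one_pos (by simpa using hXv) ?_
    rw [coe_map, Function.Embedding.coe_subtype, Subtype.val_injective.injOn.pairwise_image]
    intro x hx y hy hne
    simp only [Function.onFun, mul_one]
    exact hXsep hx hy hne
  by_cases hc : (shrunkGraph P α S).Connected
  · exact ⟨S, subset_rfl, by omega, hc⟩
  obtain ⟨a, b, haS, hbS, hab, ha⟩ := hS.exists_boundary_edge hα₀ hv hconn hc
  have hav : 2 < dist (a : Pt) v := by
    by_contra! h
    exact ha (hS.reachable_of_notMem hv haS h)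
  have haX : ∀ x ∈ X, 2 < dist a x := by
    intro x hx
    by_contra! h
    have hax : a ≠ x := fun h => ha (h ▸ hXr x hx)
    exact ha ((shrunkGraph_adj_of_notMem hax haS (hXS x hx) h).reachable.trans (hXr x hx))
  have hab' : a ≠ b := fun h => haS (h ▸ hbS)
  have haS' : ↑a ∉ S.erase b := fun h => haS (mem_of_mem_erase h)
  have hbS' : ↑b ∉ S.erase b := notMem_erase _ _
  have hS' : IsShrinkable P v (S.erase b) := hS.mono (erase_subset _ _)
  have hXS' : ∀ x ∈ insert a X, ↑x ∉ S.erase b := by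
    refine forall_mem_insert _ _ _ |>.2 ⟨haS', fun x hx h => hXS x hx (mem_of_mem_erase h)⟩
  have hXv' : ∀ x ∈ insert a X, dist (x : Pt) v ≤ 4 := by
    refine forall_mem_insert _ _ _ |>.2 ⟨?_, hXv⟩
    linarith [dist_triangle (a : Pt) b v, hS.dist_le b hbS]
  have hXr' : ∀ x ∈ insert a X, (shrunkGraph P α (S.erase b)).Reachable x ⟨v, hv⟩ := by
    refine forall_mem_insert _ _ _ |>.2
      ⟨?_, fun x hx => (hXr x hx).mono (shrunkGraph_anti hα₁ (erase_subset _ _))⟩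
    exact (shrunkGraph_adj_of_notMem hab' haS' hbS' hab).reachable.trans
      (hS'.reachable_of_notMem hv hbS' (hS.dist_le b hbS))
  have hXsep' : (↑(insert a X) : Set {x // x ∈ P}).Pairwise (2 < dist · ·) := by
    rw [coe_insert, Set.pairwise_insert]
    exact ⟨hXsep, fun x hx _ => ⟨haX x hx, dist_comm a x ▸ haX x hx⟩⟩
  obtain ⟨T, hT, hcard, hTc⟩ :=
    ih (S.erase b) (erase_ssubset hbS) hS' (insert a X) hXS' hXv' hXr' hXsep'
  refine ⟨T, hT.trans (erase_subset _ _), ?_, hTc⟩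
  have haX' : a ∉ X := fun h => by linarith [haX a h, dist_self a]
  rw [card_erase_of_mem hbS, card_insert_of_notMem haX'] at hcard
  have := card_pos.2 ⟨_, hbS⟩
  omega

end IsShrinkable

theorem exists_isShrinkable_card_le (P : Finset Pt) (v : Pt) :
    ∃ S, IsShrinkable P v S ∧ #{u ∈ P | u ≠ v ∧ dist u v ≤ 2} ≤ #S + 36 := by
  set D := {u ∈ P | u ≠ v ∧ dist u v ≤ 2}
  obtain ⟨K, hKD, hKsep, hKcov⟩ :=
    D.exists_subset_pairwise_lt_dist_forall_exists_dist_le zero_le_one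
  have hK : #K ≤ 36 := by
    refine card_le_of_pairwise_lt_dist (c := v) (r := 1 / 2) (by norm_num) (fun k hk => ?_) ?_
    · linarith [(mem_filter.1 (hKD hk)).2.2]
    · have h : (2 : ℝ) * (1 / 2) = 1 := by norm_num
      simpa only [h] using hKsep
  refine ⟨D \ K, ⟨sdiff_subset.trans (filter_subset _ _), by simp [D], ?_, ?_⟩, ?_⟩
  · exact fun s hs => (mem_filter.1 (mem_sdiff.1 hs).1).2.2
  · intro s hs
    obtain ⟨k, hk, hsk⟩ := hKcov s (mem_sdiff.1 hs).1
    obtain ⟨hkP, -, hkv⟩ := mem_filter.1 (hKD hk)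
    exact ⟨k, hkP, fun h => (mem_sdiff.1 h).2 hk, hkv, hsk⟩
  · rw [card_sdiff_of_subset hKD]
    omega

/-- If the closed unit disk graph is connected and some vertex has at least
9(4/α+1)² + 9 + k neighbors, then (P,α,k) is a yes-instance of
k-Shrinking to Connectivity. -/
theorem stmt_18 (P : Finset Pt) (α : ℝ) (hα₀ : 0 < α) (hα₁ : α ≤ 1) (k : ℕ)
    (hconn : (closedDiskGraph P (fun _ => 1)).Connected)
    (v : Pt) (hv : v ∈ P)
    (hdeg : (9 * (4 / α + 1) ^ 2 + 9 + k : ℝ) ≤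
      ({u : Pt | u ∈ P ∧ u ≠ v ∧ dist u v ≤ 2}.ncard : ℝ)) :
    ∃ S ⊆ P, k ≤ S.card ∧
      (closedDiskGraph P (fun x => if x ∈ S then α else 1)).Connected := by
  obtain ⟨S, hS, hD⟩ := exists_isShrinkable_card_le P v
  have hD' : k + 72 ≤ #{u ∈ P | u ≠ v ∧ dist u v ≤ 2} := by
    have hset : {u : Pt | u ∈ P ∧ u ≠ v ∧ dist u v ≤ 2} = ↑{u ∈ P | u ≠ v ∧ dist u v ≤ 2} := by
      ext; simp
    rw [hset, Set.ncard_coe_finset] at hdeg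
    have h4 : 4 ≤ 4 / α := by rw [le_div_iff₀ hα₀]; linarith
    have h25 : 25 ≤ (4 / α + 1) ^ 2 := by nlinarith
    have : (k + 72 : ℝ) ≤ #{u ∈ P | u ≠ v ∧ dist u v ≤ 2} := by linarith
    exact_mod_cast this
  obtain ⟨T, hTS, hT, hTc⟩ :=
    hS.exists_subset_connected hα₀.le hα₁ hv hconn ∅ (by simp) (by simp) (by simp) (by simp)
  exact ⟨T, hTS.trans hS.subset, by simp only [card_empty] at hT; omega, hTc⟩
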